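/- arXiv:2411.02211 — 2 statements merged into one kernel-verified Lean document; each statement's English description precedes it below -/
import Mathlib

section
/- For any $\lambda_S, \lambda_W > 0$ with $\lambda_S \ne \lambda_W$, any $\sigma_W > 0$, $c_W \ge 0$, and any $\tau > 0$, the quantity $\Sigma_{WS}(\tau) = -\frac{\lambda_S c_W}{\lambda_S - \lambda_W}\left[\frac{\sigma_W^2}{2\lambda_W}(1-e^{-2\lambda_W\tau}) - \frac{\sigma_W^2}{\lambda_S+\lambda_W}(1-e^{-(\lambda_S+\lambda_W)\tau})\right]$ satisfies $\Sigma_{WS}(\tau) \le 0$, with equality if and only if $c_W = 0$. -/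
open Real Set

/-! With `φ a = (1 - exp (-(a * τ))) / a = ∫ t in 0..τ, exp (-(a * t))`, `φ` is strictly
decreasing on `a > 0`, and `Σ_WS(τ) = c_W λ_S σ_W² ⋅ (φ (λ_S + λ_W) - φ (2 λ_W)) / (λ_S - λ_W)`,
a nonnegative multiple of a negative difference quotient of `φ`. -/

theorem StrictAntiOn.sub_div_sub_neg {f : ℝ → ℝ} {s : Set ℝ} (hf : StrictAntiOn f s) {x y : ℝ}
    (hx : x ∈ s) (hy : y ∈ s) (hxy : x ≠ y) : (f x - f y) / (x - y) < 0 := by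
  rcases hxy.lt_or_gt with h | h
  · exact div_neg_of_pos_of_neg (sub_pos.2 (hf hx hy h)) (sub_neg.2 h)
  · exact div_neg_of_neg_of_pos (sub_neg.2 (hf hy hx h)) (sub_pos.2 h)

theorem integral_exp_neg_mul {a : ℝ} (ha : a ≠ 0) (τ : ℝ) :
    ∫ t in (0 : ℝ)..τ, exp (-(a * t)) = (1 - exp (-(a * τ))) / a := by
  have h := intervalIntegral.integral_comp_mul_left exp (neg_ne_zero.2 ha) (a := 0) (b := τ)
  simp only [integral_exp, mul_zero, exp_zero, smul_eq_mul, neg_mul] at h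
  rw [h]
  field_simp
  ring

theorem strictAntiOn_one_sub_exp_neg_mul_div {τ : ℝ} (hτ : 0 < τ) :
    StrictAntiOn (fun a => (1 - exp (-(a * τ))) / a) (Ioi 0) := by
  intro a ha b hb hab
  have hcont (c : ℝ) : ContinuousOn (fun t => exp (-(c * t))) (Icc 0 τ) := by fun_prop
  simp only [← integral_exp_neg_mul (ne_of_gt ha), ← integral_exp_neg_mul (ne_of_gt hb)]
  refine intervalIntegral.integral_lt_integral_of_continuousOn_of_le_of_exists_lt hτ
    (hcont b) (hcont a) (fun t ht => ?_) ⟨τ, right_mem_Icc.2 hτ.le, ?_⟩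
  · exact exp_le_exp.2 (neg_le_neg (mul_le_mul_of_nonneg_right hab.le ht.1.le))
  · exact exp_lt_exp.2 (neg_lt_neg (mul_lt_mul_of_pos_right hab hτ))

theorem stmt_3 (lamS lamW sigW cW tau : ℝ)
    (hlamS : 0 < lamS) (hlamW : 0 < lamW) (hne : lamS ≠ lamW)
    (hsigW : 0 < sigW) (hcW : 0 ≤ cW) (htau : 0 < tau) :
    -(lamS * cW / (lamS - lamW)) *
        (sigW ^ 2 / (2 * lamW) * (1 - exp (-(2 * lamW * tau))) -
          sigW ^ 2 / (lamS + lamW) * (1 - exp (-((lamS + lamW) * tau)))) ≤ 0 ∧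
      (-(lamS * cW / (lamS - lamW)) *
          (sigW ^ 2 / (2 * lamW) * (1 - exp (-(2 * lamW * tau))) -
            sigW ^ 2 / (lamS + lamW) * (1 - exp (-((lamS + lamW) * tau)))) = 0 ↔ cW = 0) := by
  set φ : ℝ → ℝ := fun a => (1 - exp (-(a * tau))) / a
  have hquot : (φ (lamS + lamW) - φ (2 * lamW)) / (lamS + lamW - 2 * lamW) < 0 :=
    (strictAntiOn_one_sub_exp_neg_mul_div htau).sub_div_sub_neg (mem_Ioi.2 (by positivity))
      (mem_Ioi.2 (by positivity)) (fun h => hne (by linarith))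
  have hcoef : lamS * sigW ^ 2 * ((φ (lamS + lamW) - φ (2 * lamW)) / (lamS + lamW - 2 * lamW)) < 0 :=
    mul_neg_of_pos_of_neg (by positivity) hquot
  have hform : -(lamS * cW / (lamS - lamW)) *
      (sigW ^ 2 / (2 * lamW) * (1 - exp (-(2 * lamW * tau))) -
        sigW ^ 2 / (lamS + lamW) * (1 - exp (-((lamS + lamW) * tau)))) =
      cW * (lamS * sigW ^ 2 * ((φ (lamS + lamW) - φ (2 * lamW)) / (lamS + lamW - 2 * lamW))) := by
    have : lamS + lamW - 2 * lamW = lamS - lamW := by ring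
    simp only [φ, this]
    ring
  rw [hform]
  exact ⟨mul_nonpos_of_nonneg_of_nonpos hcW hcoef.le, mul_eq_zero_iff_right hcoef.ne⟩
end

section
/- Consider the TES temperature dynamics with piecewise-constant inflow: for $t \in [t_n, t_{n+1}]$, $R(t) = R_n + \frac{I^C_n + I^D_n}{m_S c_S}(t - t_n)$, where during charging $I^C_n = n_H \dot m c_F (A^O_n - T^{SG,in}) \ge 0$, $I^D_n = 0$, and the charging factor is $l^C(t) = \frac{A^O_n - T^{SG,in}}{\varepsilon^C (A^O_n - R(t))}$. Suppose $A^O_n > T^{SG,in}$, $\varepsilon^C \in (0,1]$, $R_n < T^{SG,in}$, and all constants $n_H, \dot m, c_F, m_S, c_S > 0$. Then $l^C$ is nondecreasing on $[t_n, t_{n+1}]$ whenever $R(t) < A^O_n$ on that interval, and $l^C(t) \le 1$ holds for all $t \in [t_n, t_{n+1}]$ if and only if $A^O_n \le T^{SG,in} + \frac{\varepsilon^C (T^{SG,in} - R_n)}{1 - \varepsilon^C + n_H \Delta t \frac{\dot m c_F}{m_S c_S}\varepsilon^C}$, where $\Delta t = t_{n+1} - t_n$. -/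
theorem stmt_9 (nH mdot cF mS cS tn tn1 Tin Rn AO epsC : ℝ)
    (hnH : 0 < nH) (hmdot : 0 < mdot) (hcF : 0 < cF) (hmS : 0 < mS) (hcS : 0 < cS)
    (htn : tn < tn1) (hAO : Tin < AO) (hepsC : epsC ∈ Set.Ioc (0 : ℝ) 1)
    (hRn : Rn < Tin)
    (R : ℝ → ℝ)
    (hR : ∀ t, R t = Rn + nH * mdot * cF * (AO - Tin) / (mS * cS) * (t - tn))
    (lC : ℝ → ℝ)
    (hlC : ∀ t, lC t = (AO - Tin) / (epsC * (AO - R t)))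
    (hbelow : ∀ t ∈ Set.Icc tn tn1, R t < AO) :
    MonotoneOn lC (Set.Icc tn tn1) ∧
      ((∀ t ∈ Set.Icc tn tn1, lC t ≤ 1) ↔
        AO ≤ Tin + epsC * (Tin - Rn) /
          (1 - epsC + nH * (tn1 - tn) * (mdot * cF / (mS * cS)) * epsC)) := by
  obtain ⟨heps0, heps1⟩ := hepsC
  have hA : 0 < AO - Tin := by linarith
  have hk : 0 < nH * mdot * cF * (AO - Tin) / (mS * cS) :=
    div_pos (mul_pos (mul_pos (mul_pos hnH hmdot) hcF) hA) (mul_pos hmS hcS)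
  have hmono : MonotoneOn lC (Set.Icc tn tn1) := by
    intro s hs t ht hst
    rw [hlC, hlC]
    have hRt : R t < AO := hbelow t ht
    have hRs : R s ≤ R t := by
      rw [hR, hR]; nlinarith [hk.le]
    apply div_le_div_of_nonneg_left (by linarith) (mul_pos heps0 (by linarith))
    nlinarith
  refine ⟨hmono, ?_⟩
  have hD : 0 < 1 - epsC + nH * (tn1 - tn) * (mdot * cF / (mS * cS)) * epsC := by
    have : 0 < nH * (tn1 - tn) * (mdot * cF / (mS * cS)) * epsC :=
      mul_pos (mul_pos (mul_pos hnH (by linarith)) (div_pos (mul_pos hmdot hcF) (mul_pos hmS hcS))) heps0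
    linarith
  have htn1mem : tn1 ∈ Set.Icc tn tn1 := ⟨htn.le, le_refl _⟩
  have hRtn1 : R tn1 < AO := hbelow tn1 htn1mem
  have heq : epsC * (AO - R tn1) - (AO - Tin) =
      epsC * (Tin - Rn) - (AO - Tin) *
        (1 - epsC + nH * (tn1 - tn) * (mdot * cF / (mS * cS)) * epsC) := by
    rw [hR]
    have hmsS : (mS * cS) ≠ 0 := by positivity
    field_simp
    ring
  have hkey : lC tn1 ≤ 1 ↔
      AO ≤ Tin + epsC * (Tin - Rn) /
        (1 - epsC + nH * (tn1 - tn) * (mdot * cF / (mS * cS)) * epsC) := by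
    rw [hlC, div_le_one (mul_pos heps0 (by linarith)), ← sub_le_iff_le_add', le_div_iff₀ hD]
    constructor <;> intro h <;> nlinarith
  constructor
  · intro h
    exact hkey.mp (h tn1 htn1mem)
  · intro h t ht
    exact le_trans (hmono ht htn1mem ht.2) (hkey.mpr h)
end
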